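/- arXiv:1101.4655 — 2 statements merged into one kernel-verified Lean document; each statement's English description precedes it below -/
import Mathlib

section
/- Two words w and w' are in the same commutation class if and only if P(w) and P(w') are isomorphic as labeled posets. Consequently, w ↦ P(w) induces a bijection between commutation classes of words and isomorphism classes of word posets. -/
def CommMove {S : Type*} (comm : S → S → Prop) (w w' : List S) : Prop :=
  ∃ (u v : List S) (a b : S), comm a b ∧ w = u ++ a :: b :: v ∧ w' = u ++ b :: a :: v

def CommClass {S : Type*} (comm : S → S → Prop) : List S → List S → Prop :=
  Relation.ReflTransGen (CommMove comm)

def WStep {S : Type*} (comm : S → S → Prop) (w : List S) (i j : Fin w.length) : Prop :=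
  i ≤ j ∧ (w.get i = w.get j ∨ ¬ comm (w.get i) (w.get j))

/-- The word-poset order `≤_w` on positions of `w`. -/
def WLe {S : Type*} (comm : S → S → Prop) (w : List S) : Fin w.length → Fin w.length → Prop :=
  Relation.TransGen (WStep comm w)


/-! A commutation move transposes two adjacent positions holding distinct commuting letters;
no covering step `WStep` joins those two positions, so the transposition is an isomorphism of
labelled posets. Conversely, if `f : P(w) ≅ P(w')`, the position `x` of `w` sent to the first
position of `w'` is minimal in `P(w)`: every letter before it commutes with it, so commutation
moves bring it to the front. A minimal element is never an intermediate point of a chain, so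
erasing `x` and `f x` leaves isomorphic posets, and induction on the length concludes. -/

open Relation

theorem Relation.TransGen.on_of_not_transGen {α β : Type*} {r : α → α → Prop} {e : β → α}
    {x : α} (he : ∀ a, a ≠ x → ∃ b, e b = a) (hx : ∀ b, ¬ TransGen r (e b) x) {i j : β}
    (h : TransGen r (e i) (e j)) : TransGen (Function.onFun r e) i j := by
  suffices ∀ q, TransGen r (e i) q → ∀ j, q = e j → TransGen (Function.onFun r e) i j from
    this _ h j rfl
  intro q hq
  induction hq with
  | single hs => rintro j rfl; exact .single hs
  | @tail m _ hm hs ih =>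
    rintro j rfl
    obtain ⟨m', rfl⟩ := he m fun hmx => hx i (hmx ▸ hm)
    exact (ih m' rfl).tail hs

section WordPoset

variable {S : Type*} {comm : S → S → Prop}

theorem WLe.le {w : List S} {i j : Fin w.length} (h : WLe comm w i j) : i ≤ j := by
  induction h with
  | single h => exact h.1
  | tail _ h ih => exact ih.trans h.1

def WordPosetIsomorphic (comm : S → S → Prop) (w w' : List S) : Prop :=
  ∃ f : Fin w.length → Fin w'.length, Function.Bijective f ∧
    (∀ i j, WLe comm w i j ↔ WLe comm w' (f i) (f j)) ∧ (∀ i, w'.get (f i) = w.get i)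

namespace WordPosetIsomorphic

protected theorem refl (w : List S) : WordPosetIsomorphic comm w w :=
  ⟨id, Function.bijective_id, fun _ _ => Iff.rfl, fun _ => rfl⟩

protected theorem trans {w₁ w₂ w₃ : List S} (h₁ : WordPosetIsomorphic comm w₁ w₂)
    (h₂ : WordPosetIsomorphic comm w₂ w₃) : WordPosetIsomorphic comm w₁ w₃ := by
  obtain ⟨f, hf, hfle, hfget⟩ := h₁
  obtain ⟨g, hg, hgle, hgget⟩ := h₂
  exact ⟨g ∘ f, hg.comp hf, fun i j => (hfle i j).trans (hgle _ _),
    fun i => (hgget _).trans (hfget _)⟩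

theorem of_equiv {w w' : List S} (e : Fin w.length ≃ Fin w'.length)
    (he : ∀ i j, WStep comm w i j → WStep comm w' (e i) (e j))
    (he_symm : ∀ i j, WStep comm w' i j → WStep comm w (e.symm i) (e.symm j))
    (hget : ∀ i, w'.get (e i) = w.get i) : WordPosetIsomorphic comm w w' :=
  ⟨e, e.bijective, fun i j => ⟨TransGen.lift e he i j,
    fun h => by simpa [Function.onFun, WLe] using TransGen.lift e.symm he_symm _ _ h⟩, hget⟩

end WordPosetIsomorphic

theorem getElem?_append_swap (u v : List S) (a b : S) (k : ℕ) :
    (u ++ b :: a :: v)[Equiv.swap u.length (u.length + 1) k]? = (u ++ a :: b :: v)[k]? := by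
  rw [Equiv.swap_apply_def]
  split_ifs with h₁ h₂
  · simp [h₁]
  · simp [h₂]
  · rw [List.getElem?_append, List.getElem?_append]
    split_ifs with h
    · rfl
    · obtain ⟨m, hm⟩ : ∃ m, k - u.length = m + 2 := ⟨k - u.length - 2, by omega⟩
      simp [hm]

def swapAdjacent (u v : List S) (a b : S) :
    Fin (u ++ a :: b :: v).length ≃ Fin (u ++ b :: a :: v).length where
  toFun i := ⟨Equiv.swap u.length (u.length + 1) i, by
    have := i.isLt; simp only [List.length_append, List.length_cons] at this ⊢
    rw [Equiv.swap_apply_def]; split_ifs <;> omega⟩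
  invFun i := ⟨Equiv.swap u.length (u.length + 1) i, by
    have := i.isLt; simp only [List.length_append, List.length_cons] at this ⊢
    rw [Equiv.swap_apply_def]; split_ifs <;> omega⟩
  left_inv i := Fin.ext (Equiv.swap_apply_self _ _ _)
  right_inv i := Fin.ext (Equiv.swap_apply_self _ _ _)

@[simp]
theorem val_swapAdjacent (u v : List S) (a b : S) (i : Fin (u ++ a :: b :: v).length) :
    (swapAdjacent u v a b i : ℕ) = Equiv.swap u.length (u.length + 1) i := rfl

theorem get_swapAdjacent (u v : List S) (a b : S) (i : Fin (u ++ a :: b :: v).length) :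
    (u ++ b :: a :: v).get (swapAdjacent u v a b i) = (u ++ a :: b :: v).get i := by
  have h := getElem?_append_swap u v a b i
  rw [← val_swapAdjacent, List.getElem?_eq_getElem (swapAdjacent u v a b i).isLt,
    List.getElem?_eq_getElem i.isLt] at h
  exact Option.some_injective _ h

theorem wStep_swapAdjacent (hirr : ∀ a, ¬ comm a a) {u v : List S} {a b : S} (hab : comm a b)
    {i j : Fin (u ++ a :: b :: v).length} (h : WStep comm (u ++ a :: b :: v) i j) :
    WStep comm (u ++ b :: a :: v) (swapAdjacent u v a b i) (swapAdjacent u v a b j) := by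
  obtain ⟨hij, hlabel⟩ := h
  have hadj : ¬ (i.val = u.length ∧ j.val = u.length + 1) := by
    rintro ⟨hi, hj⟩
    have hi' : (u ++ a :: b :: v).get i = a := by simp [hi]
    have hj' : (u ++ a :: b :: v).get j = b := by simp [hj]
    rw [hi', hj'] at hlabel
    rcases hlabel with rfl | hnot
    exacts [hirr a hab, hnot hab]
  refine ⟨?_, by rwa [get_swapAdjacent, get_swapAdjacent]⟩
  rw [Fin.le_def] at hij ⊢
  simp only [val_swapAdjacent, Equiv.swap_apply_def]
  split_ifs <;> omega

theorem CommMove.wordPosetIsomorphic (hsym : ∀ a b, comm a b → comm b a)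
    (hirr : ∀ a, ¬ comm a a) {w w' : List S} (h : CommMove comm w w') :
    WordPosetIsomorphic comm w w' := by
  obtain ⟨u, v, a, b, hab, rfl, rfl⟩ := h
  exact .of_equiv (swapAdjacent u v a b) (fun _ _ => wStep_swapAdjacent hirr hab)
    (fun _ _ => wStep_swapAdjacent hirr (hsym a b hab)) (get_swapAdjacent u v a b)

theorem CommClass.wordPosetIsomorphic (hsym : ∀ a b, comm a b → comm b a)
    (hirr : ∀ a, ¬ comm a a) {w w' : List S} (h : CommClass comm w w') :
    WordPosetIsomorphic comm w w' := by
  induction h with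
  | refl => exact .refl _
  | tail _ hmove ih => exact ih.trans (hmove.wordPosetIsomorphic hsym hirr)

theorem CommClass.cons (c : S) {w w' : List S} (h : CommClass comm w w') :
    CommClass comm (c :: w) (c :: w') := by
  refine ReflTransGen.lift (c :: ·) ?_ _ _ h
  rintro _ _ ⟨u, v, a, b, hab, rfl, rfl⟩
  exact ⟨c :: u, v, a, b, hab, rfl, rfl⟩

theorem commClass_append_cons_of_forall_comm {u : List S} (v : List S) {a : S}
    (h : ∀ x ∈ u, comm x a) : CommClass comm (u ++ a :: v) (a :: (u ++ v)) := by
  induction u with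
  | nil => exact .refl
  | cons c u ih =>
    have hc : comm c a := h c List.mem_cons_self
    have hmove : CommMove comm (c :: a :: (u ++ v)) (a :: c :: (u ++ v)) :=
      ⟨[], u ++ v, c, a, hc, rfl, rfl⟩
    exact ((ih fun x hx => h x (List.mem_cons_of_mem c hx)).cons c).tail hmove

theorem commClass_cons_eraseIdx_of_minimal {w : List S} (x : Fin w.length)
    (hx : ∀ j, WLe comm w j x → j = x) : CommClass comm w (w.get x :: w.eraseIdx x) := by
  have hcomm : ∀ y ∈ w.take x, comm y (w.get x) := by
    intro y hy
    obtain ⟨k, hk, rfl⟩ := List.mem_iff_getElem.mp hy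
    have hkx : k < x := (lt_min_iff.mp (List.length_take ▸ hk)).1
    by_contra hnot
    rw [List.getElem_take] at hnot
    exact hkx.ne (congrArg Fin.val (hx ⟨k, hkx.trans x.isLt⟩ (.single ⟨hkx.le, Or.inr hnot⟩)))
  have h := commClass_append_cons_of_forall_comm (w.drop (x + 1)) hcomm
  rw [List.get_eq_getElem] at h ⊢
  rwa [← List.eraseIdx_eq_take_drop_succ, ← List.drop_eq_getElem_cons, List.take_append_drop] at h

def eraseIdxFinEquiv (w : List S) (x : Fin w.length) :
    Fin (w.eraseIdx x).length ≃ {i : Fin w.length // i ≠ x} where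
  toFun i := ⟨⟨if (i : ℕ) < x then (i : ℕ) else i + 1, by
      have := i.isLt; have := List.length_eraseIdx_of_lt x.isLt; split_ifs <;> omega⟩,
    fun h => by have := congrArg Fin.val h; simp only at this; split_ifs at this <;> omega⟩
  invFun i := ⟨if (i : ℕ) < x then (i : ℕ) else i - 1, by
    have := i.1.isLt; have := Fin.val_ne_of_ne i.2; have := List.length_eraseIdx_of_lt x.isLt
    split_ifs <;> omega⟩
  left_inv i := by ext; simp only; split_ifs <;> omega
  right_inv i := by
    have := Fin.val_ne_of_ne i.2; ext; simp only; split_ifs <;> omega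

theorem val_eraseIdxFinEquiv (w : List S) (x : Fin w.length) (i : Fin (w.eraseIdx x).length) :
    ((eraseIdxFinEquiv w x i : Fin w.length) : ℕ) = if (i : ℕ) < x then (i : ℕ) else i + 1 := rfl

theorem get_eraseIdxFinEquiv (w : List S) (x : Fin w.length) (i : Fin (w.eraseIdx x).length) :
    w.get (eraseIdxFinEquiv w x i) = (w.eraseIdx x).get i := by
  simp only [List.get_eq_getElem, List.getElem_eraseIdx, val_eraseIdxFinEquiv]
  split_ifs <;> rfl

theorem wStep_eraseIdx_iff {w : List S} (x : Fin w.length) (i j : Fin (w.eraseIdx x).length) :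
    WStep comm (w.eraseIdx x) i j ↔
      WStep comm w (eraseIdxFinEquiv w x i) (eraseIdxFinEquiv w x j) := by
  have hle : i ≤ j ↔ (eraseIdxFinEquiv w x i : Fin w.length) ≤ eraseIdxFinEquiv w x j := by
    simp only [Fin.le_def, val_eraseIdxFinEquiv]
    split_ifs <;> omega
  simp only [WStep, hle, get_eraseIdxFinEquiv]

theorem wLe_eraseIdx_iff {w : List S} {x : Fin w.length} (hx : ∀ j, WLe comm w j x → j = x)
    (i j : Fin (w.eraseIdx x).length) :
    WLe comm (w.eraseIdx x) i j ↔
      WLe comm w (eraseIdxFinEquiv w x i) (eraseIdxFinEquiv w x j) := by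
  set e : Fin (w.eraseIdx x).length → Fin w.length := fun i => eraseIdxFinEquiv w x i
  have hstep : WStep comm (w.eraseIdx x) = Function.onFun (WStep comm w) e := by
    ext i j; exact wStep_eraseIdx_iff x i j
  rw [WLe, hstep]
  refine ⟨TransGen.lift e (fun _ _ => id) i j, TransGen.on_of_not_transGen (e := e) (x := x) ?_ ?_⟩
  · exact fun k hk => ⟨(eraseIdxFinEquiv w x).symm ⟨k, hk⟩, by simp [e]⟩
  · exact fun k hk => (eraseIdxFinEquiv w x k).2 (hx _ hk)

theorem wordPosetIsomorphic_eraseIdx {w w' : List S} {f : Fin w.length → Fin w'.length}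
    (hf : Function.Bijective f) (hle : ∀ i j, WLe comm w i j ↔ WLe comm w' (f i) (f j))
    (hget : ∀ i, w'.get (f i) = w.get i) {x : Fin w.length} (hx : ∀ j, WLe comm w j x → j = x) :
    WordPosetIsomorphic comm (w.eraseIdx x) (w'.eraseIdx (f x)) := by
  have hfx : ∀ j, WLe comm w' j (f x) → j = f x := by
    intro j hj
    obtain ⟨k, rfl⟩ := hf.surjective j
    rw [hx k ((hle k x).mpr hj)]
  let g : {i // i ≠ x} ≃ {j // j ≠ f x} :=
    (Equiv.ofBijective f hf).subtypeEquiv fun _ => hf.injective.ne_iff.symm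
  let e := (eraseIdxFinEquiv w x).trans (g.trans (eraseIdxFinEquiv w' (f x)).symm)
  have he : ∀ i, (eraseIdxFinEquiv w' (f x) (e i) : Fin w'.length) = f (eraseIdxFinEquiv w x i) :=
    fun i => by simp only [e, Equiv.trans_apply, Equiv.apply_symm_apply]; rfl
  refine ⟨e, e.bijective, fun i j => ?_, fun i => ?_⟩
  · rw [wLe_eraseIdx_iff hx, wLe_eraseIdx_iff hfx, he, he, hle]
  · rw [← get_eraseIdxFinEquiv, he, hget, get_eraseIdxFinEquiv]

theorem WordPosetIsomorphic.commClass {w w' : List S} (h : WordPosetIsomorphic comm w w') :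
    CommClass comm w w' := by
  induction w' generalizing w with
  | nil =>
    obtain ⟨f, hf, -⟩ := h
    have hw : w.length = 0 := by simpa using Fintype.card_of_bijective hf
    rw [List.length_eq_zero_iff.mp hw]
    exact .refl
  | cons c t ih =>
    obtain ⟨f, hf, hle, hget⟩ := h
    obtain ⟨x, hx0⟩ := hf.surjective 0
    have hx : ∀ j, WLe comm w j x → j = x := by
      intro j hj
      have hfj : f j ≤ 0 := hx0 ▸ ((hle j x).mp hj).le
      exact hf.injective (hx0 ▸ Fin.le_zero_iff.mp hfj)
    have hlabel : w.get x = c := by rw [← hget x, hx0]; rfl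
    have hfront := commClass_cons_eraseIdx_of_minimal x hx
    rw [hlabel] at hfront
    have hrest := wordPosetIsomorphic_eraseIdx hf hle hget hx
    rw [hx0, Fin.val_zero, List.eraseIdx_cons_zero] at hrest
    exact hfront.trans ((ih hrest).cons c)

end WordPoset

/-- Same commutation class iff the labeled word posets are isomorphic; this is the
bijection between commutation classes and isomorphism classes of word posets. -/
theorem commClass_iff_isomorphic_word_posets {S : Type*} (comm : S → S → Prop)
    (hsym : ∀ a b, comm a b → comm b a) (hirr : ∀ a, ¬ comm a a) (w w' : List S) :
    CommClass comm w w' ↔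
      ∃ f : Fin w.length → Fin w'.length, Function.Bijective f ∧
        (∀ i j, WLe comm w i j ↔ WLe comm w' (f i) (f j)) ∧
        (∀ i, w'.get (f i) = w.get i) :=
  ⟨CommClass.wordPosetIsomorphic hsym hirr, WordPosetIsomorphic.commClass⟩
end

section
/- If a permutation w in S_n contains no indices i < j < k with w(i) > w(j) > w(k) (i.e., w is 321-avoiding), then all reduced words of w form a single commutation class. -/
/-- The adjacent transposition `sᵢ = (i, i+1)` in `Sₙ`. -/
def adjSwap (n : ℕ) (i : Fin (n - 1)) : Equiv.Perm (Fin n) :=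
  Equiv.swap ⟨i.1, by omega⟩ ⟨i.1 + 1, by omega⟩

/-- `l` is a reduced word for the permutation `w`: its product is `w` and
it has minimal length among such words. -/
def IsReducedPermWord (n : ℕ) (w : Equiv.Perm (Fin n)) (l : List (Fin (n - 1))) : Prop :=
  (l.map (adjSwap n)).prod = w ∧
    ∀ l' : List (Fin (n - 1)), (l'.map (adjSwap n)).prod = w → l.length ≤ l'.length

/-!
Left multiplication by `sₐ` swaps the values `a` and `a + 1`, so it changes the number of
inversions by exactly one; hence reduced words have length `invCount w`, and the first letter `a`
of a reduced word is a left descent: the value `a + 1` stands to the left of the value `a`. If `w`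
avoids 321, two distinct left descents `a`, `b` cannot be adjacent (otherwise the values `a`,
`a + 1`, `a + 2` would stand in decreasing order), so `sₐ` and `s_b` commute and `w` also has
reduced words `a b m` and `b a m`. Since `sₐ w` again avoids 321, induction on the length joins
any two reduced words of `w` through these.
-/

open Equiv Finset

section

variable {n : ℕ}

def adjLo (a : Fin (n - 1)) : Fin n := ⟨a.1, by omega⟩

def adjHi (a : Fin (n - 1)) : Fin n := ⟨a.1 + 1, by omega⟩

lemma adjLo_lt_adjHi (a : Fin (n - 1)) : adjLo a < adjHi a :=
  Fin.lt_def.2 (Nat.lt_succ_self _)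

lemma adjSwap_eq_swap (a : Fin (n - 1)) : adjSwap n a = swap (adjLo a) (adjHi a) := rfl

@[simp]
lemma adjSwap_mul_self_mul (a : Fin (n - 1)) (w : Perm (Fin n)) :
    adjSwap n a * (adjSwap n a * w) = w :=
  swap_mul_self_mul _ _ w

lemma adjSwap_mul_inv_apply (a : Fin (n - 1)) (w : Perm (Fin n)) (x : Fin n) :
    (adjSwap n a * w)⁻¹ x = w⁻¹ (adjSwap n a x) := by
  rw [mul_inv_rev, Perm.mul_apply, adjSwap_eq_swap, swap_inv]

lemma adjSwap_lt_adjSwap_iff (a : Fin (n - 1)) {u v : Fin n} :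
    adjSwap n a u < adjSwap n a v ↔
      (u < v ∧ ¬(u = adjLo a ∧ v = adjHi a)) ∨ (u = adjHi a ∧ v = adjLo a) := by
  simp only [adjSwap_eq_swap, swap_apply_def, adjLo, adjHi]
  split_ifs <;> simp only [Fin.ext_iff, Fin.lt_def] at * <;> omega

def AdjCommute (a b : Fin (n - 1)) : Prop := a.1 + 2 ≤ b.1 ∨ b.1 + 2 ≤ a.1

lemma AdjCommute.symm {a b : Fin (n - 1)} (h : AdjCommute a b) : AdjCommute b a :=
  Or.symm h

instance : Std.Symm (AdjCommute (n := n)) := ⟨fun _ _ => AdjCommute.symm⟩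

lemma adjSwap_mul_comm {a b : Fin (n - 1)} (h : AdjCommute a b) :
    adjSwap n a * adjSwap n b = adjSwap n b * adjSwap n a := by
  ext x
  simp only [AdjCommute, Perm.mul_apply, adjSwap, swap_apply_def] at h ⊢
  split_ifs <;> simp only [Fin.ext_iff] at * <;> omega

def invCount (w : Perm (Fin n)) : ℕ :=
  #{p : Fin n × Fin n | p.1 < p.2 ∧ w p.2 < w p.1}

lemma invCount_one : invCount (1 : Perm (Fin n)) = 0 := by
  rw [invCount, card_eq_zero, filter_eq_empty_iff]
  exact fun p _ h => lt_asymm h.1 h.2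

lemma invCount_adjSwap_mul_of_lt {w : Perm (Fin n)} {a : Fin (n - 1)}
    (h : w⁻¹ (adjLo a) < w⁻¹ (adjHi a)) :
    invCount (adjSwap n a * w) = invCount w + 1 := by
  set P := w⁻¹ (adjLo a)
  set Q := w⁻¹ (adjHi a)
  have hP : ∀ i, w i = adjLo a ↔ i = P := fun i => Perm.eq_inv_iff_eq.symm
  have hQ : ∀ i, w i = adjHi a ↔ i = Q := fun i => Perm.eq_inv_iff_eq.symm
  have hPQ : (P, Q) ∉ ({p : Fin n × Fin n | p.1 < p.2 ∧ w p.2 < w p.1} : Finset _) := by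
    simp [(hP P).2 rfl, (hQ Q).2 rfl, (adjLo_lt_adjHi a).not_gt]
  rw [invCount, invCount, ← card_insert_of_notMem hPQ]
  congr 1
  ext ⟨i, j⟩
  simp only [mem_filter, mem_insert, mem_univ, true_and, Prod.mk.injEq, Perm.mul_apply,
    adjSwap_lt_adjSwap_iff, hP, hQ]
  grind

def IsLeftDescent (w : Perm (Fin n)) (a : Fin (n - 1)) : Prop :=
  w⁻¹ (adjHi a) < w⁻¹ (adjLo a)

lemma isLeftDescent_or_lt (w : Perm (Fin n)) (a : Fin (n - 1)) :
    IsLeftDescent w a ∨ w⁻¹ (adjLo a) < w⁻¹ (adjHi a) :=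
  lt_or_gt_of_ne (w⁻¹.injective.ne (adjLo_lt_adjHi a).ne')

lemma invCount_adjSwap_mul_of_isLeftDescent {w : Perm (Fin n)} {a : Fin (n - 1)}
    (h : IsLeftDescent w a) : invCount (adjSwap n a * w) + 1 = invCount w := by
  have h' : (adjSwap n a * w)⁻¹ (adjLo a) < (adjSwap n a * w)⁻¹ (adjHi a) := by
    rwa [adjSwap_mul_inv_apply, adjSwap_mul_inv_apply, adjSwap_eq_swap, swap_apply_left,
      swap_apply_right]
  simpa using (invCount_adjSwap_mul_of_lt h').symm

lemma invCount_prod_le_length (l : List (Fin (n - 1))) :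
    invCount (l.map (adjSwap n)).prod ≤ l.length := by
  induction l with
  | nil => simp [invCount_one]
  | cons a t ih =>
    rw [List.map_cons, List.prod_cons, List.length_cons]
    rcases isLeftDescent_or_lt (t.map (adjSwap n)).prod a with h | h
    · have := invCount_adjSwap_mul_of_isLeftDescent h
      omega
    · rw [invCount_adjSwap_mul_of_lt h]
      omega

lemma eq_one_of_forall_not_isLeftDescent {w : Perm (Fin n)} (h : ∀ a, ¬IsLeftDescent w a) :
    w = 1 := by
  rcases n with _ | m
  · exact Subsingleton.elim _ _
  have hmono : StrictMono ⇑w⁻¹ := Fin.strictMono_iff_lt_succ.2 fun i =>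
    (isLeftDescent_or_lt w i).resolve_left (h i)
  exact inv_eq_one.1 (Perm.ext fun _ => hmono.apply_eq)

lemma exists_prod_eq_length_eq_invCount (w : Perm (Fin n)) :
    ∃ l : List (Fin (n - 1)), (l.map (adjSwap n)).prod = w ∧ l.length = invCount w := by
  induction hk : invCount w generalizing w with
  | zero =>
    refine ⟨[], (eq_one_of_forall_not_isLeftDescent fun a ha => ?_).symm, rfl⟩
    have := invCount_adjSwap_mul_of_isLeftDescent ha
    omega
  | succ k ih =>
    obtain ⟨a, ha⟩ : ∃ a, IsLeftDescent w a := by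
      by_contra! h
      rw [eq_one_of_forall_not_isLeftDescent h, invCount_one] at hk
      omega
    have := invCount_adjSwap_mul_of_isLeftDescent ha
    obtain ⟨l, hl, hlen⟩ := ih (adjSwap n a * w) (by omega)
    exact ⟨a :: l, by simp [hl], by simp [hlen]⟩

lemma isReducedPermWord_iff {w : Perm (Fin n)} {l : List (Fin (n - 1))} :
    IsReducedPermWord n w l ↔ (l.map (adjSwap n)).prod = w ∧ l.length = invCount w := by
  refine ⟨fun ⟨hprod, hmin⟩ => ⟨hprod, le_antisymm ?_ (hprod ▸ invCount_prod_le_length l)⟩,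
    fun ⟨hprod, hlen⟩ => ⟨hprod, fun l' hl' => hlen ▸ hl' ▸ invCount_prod_le_length l'⟩⟩
  obtain ⟨l₀, hprod₀, hlen₀⟩ := exists_prod_eq_length_eq_invCount w
  exact hlen₀ ▸ hmin l₀ hprod₀

lemma prod_cons_eq_iff {w : Perm (Fin n)} {a : Fin (n - 1)} {t : List (Fin (n - 1))} :
    ((a :: t).map (adjSwap n)).prod = w ↔ (t.map (adjSwap n)).prod = adjSwap n a * w := by
  constructor
  · rintro rfl
    simp
  · intro h
    simp [h]

lemma IsReducedPermWord.isLeftDescent_head {w : Perm (Fin n)} {a : Fin (n - 1)}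
    {t : List (Fin (n - 1))} (h : IsReducedPermWord n w (a :: t)) : IsLeftDescent w a := by
  obtain ⟨hprod, hlen⟩ := isReducedPermWord_iff.1 h
  have hle := prod_cons_eq_iff.1 hprod ▸ invCount_prod_le_length t
  refine (isLeftDescent_or_lt w a).resolve_right fun hlt => ?_
  rw [invCount_adjSwap_mul_of_lt hlt] at hle
  simp only [List.length_cons] at hlen
  omega

lemma isReducedPermWord_cons_iff {w : Perm (Fin n)} {a : Fin (n - 1)} {t : List (Fin (n - 1))}
    (ha : IsLeftDescent w a) :
    IsReducedPermWord n w (a :: t) ↔ IsReducedPermWord n (adjSwap n a * w) t := by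
  have := invCount_adjSwap_mul_of_isLeftDescent ha
  rw [isReducedPermWord_iff, isReducedPermWord_iff, prod_cons_eq_iff, List.length_cons]
  exact and_congr_right fun _ => by omega

def Avoids321 (w : Perm (Fin n)) : Prop :=
  ¬∃ i j k : Fin n, i < j ∧ j < k ∧ w j < w i ∧ w k < w j

lemma Avoids321.adjSwap_mul {w : Perm (Fin n)} {a : Fin (n - 1)} (hw : Avoids321 w)
    (ha : IsLeftDescent w a) : Avoids321 (adjSwap n a * w) := by
  rintro ⟨i, j, k, hij, hjk, hji, hkj⟩
  have hLo : ∀ i, w i = adjLo a ↔ i = w⁻¹ (adjLo a) := fun i => Perm.eq_inv_iff_eq.symm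
  have hHi : ∀ i, w i = adjHi a ↔ i = w⁻¹ (adjHi a) := fun i => Perm.eq_inv_iff_eq.symm
  simp only [Perm.mul_apply, adjSwap_lt_adjSwap_iff, hLo, hHi] at hji hkj
  unfold IsLeftDescent at ha
  exact hw ⟨i, j, k, hij, hjk, by grind, by grind⟩

lemma Avoids321.ne_succ_of_isLeftDescent {w : Perm (Fin n)} {a b : Fin (n - 1)}
    (hw : Avoids321 w) (ha : IsLeftDescent w a) (hb : IsLeftDescent w b) : b.1 ≠ a.1 + 1 := by
  intro hab
  have hLo : adjLo b = adjHi a := Fin.ext hab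
  refine hw ⟨w⁻¹ (adjHi b), w⁻¹ (adjLo b), w⁻¹ (adjLo a), hb, hLo ▸ ha, ?_, ?_⟩ <;>
    simp only [Perm.coe_inv, apply_symm_apply, adjLo, adjHi, Fin.lt_def] <;> omega

lemma Avoids321.adjCommute_of_isLeftDescent {w : Perm (Fin n)} {a b : Fin (n - 1)}
    (hw : Avoids321 w) (ha : IsLeftDescent w a) (hb : IsLeftDescent w b) (hab : a ≠ b) :
    AdjCommute a b := by
  have := hw.ne_succ_of_isLeftDescent ha hb
  have := hw.ne_succ_of_isLeftDescent hb ha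
  have := Fin.val_ne_of_ne hab
  unfold AdjCommute
  omega

lemma IsLeftDescent.adjSwap_mul {w : Perm (Fin n)} {a b : Fin (n - 1)} (hb : IsLeftDescent w b)
    (hab : AdjCommute a b) : IsLeftDescent (adjSwap n a * w) b := by
  unfold AdjCommute at hab
  unfold IsLeftDescent
  rwa [adjSwap_mul_inv_apply, adjSwap_mul_inv_apply, adjSwap_eq_swap,
    swap_apply_of_ne_of_ne, swap_apply_of_ne_of_ne] <;>
    simp only [ne_eq, adjLo, adjHi, Fin.ext_iff] <;> omega

section CommClass

variable {S : Type*} {c : S → S → Prop}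

lemma CommClass.cons_s19 (a : S) {l l' : List S} (h : CommClass c l l') :
    CommClass c (a :: l) (a :: l') := by
  refine Relation.ReflTransGen.lift (a :: ·) ?_ _ _ h
  rintro _ _ ⟨u, v, p, q, hpq, rfl, rfl⟩
  exact ⟨a :: u, v, p, q, hpq, rfl, rfl⟩

lemma CommClass.swap {p q : S} (hpq : c p q) (l : List S) :
    CommClass c (p :: q :: l) (q :: p :: l) :=
  Relation.ReflTransGen.single ⟨[], l, p, q, hpq, rfl, rfl⟩

instance [Std.Symm c] : Std.Symm (CommMove c) :=
  ⟨fun _ _ ⟨u, v, p, q, hpq, hl, hl'⟩ => ⟨u, v, q, p, Std.Symm.symm _ _ hpq, hl', hl⟩⟩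

lemma CommClass.symm [Std.Symm c] {l l' : List S} (h : CommClass c l l') : CommClass c l' l :=
  Std.Symm.symm (r := Relation.ReflTransGen (CommMove c)) _ _ h

end CommClass

theorem Avoids321.commClass {w : Perm (Fin n)} (hw : Avoids321 w) {l l' : List (Fin (n - 1))}
    (hl : IsReducedPermWord n w l) (hl' : IsReducedPermWord n w l') :
    CommClass AdjCommute l l' := by
  induction hk : invCount w generalizing w l l' with
  | zero =>
    obtain rfl : l = [] := List.length_eq_zero_iff.1 (hk ▸ (isReducedPermWord_iff.1 hl).2)
    obtain rfl : l' = [] := List.length_eq_zero_iff.1 (hk ▸ (isReducedPermWord_iff.1 hl').2)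
    exact .refl
  | succ k ih =>
    obtain _ | ⟨a, t⟩ := l
    · cases hk.symm.trans (isReducedPermWord_iff.1 hl).2.symm
    obtain _ | ⟨b, t'⟩ := l'
    · cases hk.symm.trans (isReducedPermWord_iff.1 hl').2.symm
    have ha := hl.isLeftDescent_head
    have hb := hl'.isLeftDescent_head
    have hka : invCount (adjSwap n a * w) = k := by
      have := invCount_adjSwap_mul_of_isLeftDescent ha
      omega
    have hkb : invCount (adjSwap n b * w) = k := by
      have := invCount_adjSwap_mul_of_isLeftDescent hb
      omega
    have ht := (isReducedPermWord_cons_iff ha).1 hl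
    have ht' := (isReducedPermWord_cons_iff hb).1 hl'
    by_cases hab : a = b
    · subst hab
      exact (ih (hw.adjSwap_mul ha) ht ht' hka).cons_s19 a
    have hcomm := hw.adjCommute_of_isLeftDescent ha hb hab
    obtain ⟨m, hm⟩ : ∃ m, IsReducedPermWord n (adjSwap n b * (adjSwap n a * w)) m :=
      (exists_prod_eq_length_eq_invCount _).imp fun _ => isReducedPermWord_iff.2
    have hbm : IsReducedPermWord n (adjSwap n a * w) (b :: m) :=
      (isReducedPermWord_cons_iff (hb.adjSwap_mul hcomm)).2 hm
    have ham : IsReducedPermWord n (adjSwap n b * w) (a :: m) := by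
      refine (isReducedPermWord_cons_iff (ha.adjSwap_mul hcomm.symm)).2 ?_
      rwa [← mul_assoc, adjSwap_mul_comm hcomm, mul_assoc]
    exact ((ih (hw.adjSwap_mul ha) ht hbm hka).cons_s19 a).trans <|
      (CommClass.swap hcomm m).trans <| ((ih (hw.adjSwap_mul hb) ht' ham hkb).cons_s19 b).symm

end

/-- A 321-avoiding permutation has a single commutation class of reduced words. -/
theorem avoiding_321_single_commClass (n : ℕ) (w : Equiv.Perm (Fin n))
    (havoid : ¬ ∃ i j k : Fin n, i < j ∧ j < k ∧ w j < w i ∧ w k < w j)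
    (l l' : List (Fin (n - 1)))
    (hl : IsReducedPermWord n w l) (hl' : IsReducedPermWord n w l') :
    CommClass (fun a b : Fin (n - 1) => (a.1 + 2 ≤ b.1 ∨ b.1 + 2 ≤ a.1)) l l' :=
  Avoids321.commClass havoid hl hl'
end
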